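/- The Jordanian twisting element satisfies the Drinfeld cocycle identity at the level of the Borel algebra represented by 2×2 matrices: with H = E₁₁ (acting so that [H,E]=E for E = E₁₂, E²=0), σ = log(1+ξE) = ξE, the element F = exp(H ⊗ σ) in U(B)⊗U(B) satisfies F₁₂ · (Δ⊗id)(F) = F₂₃ · (id⊗Δ)(F), where Δ is the primitive coproduct Δ(x)=x⊗1+1⊗x extended as an algebra map. -/

import Mathlib

set_option maxHeartbeats 1000000
set_option synthInstance.maxHeartbeats 400000

open TensorProduct Matrix

noncomputable section

variable (K : Type) [Field K] [CharZero K]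

abbrev M2 := Matrix (Fin 2) (Fin 2) K

abbrev T3m := M2 K ⊗[K] (M2 K ⊗[K] M2 K)

def Hm : M2 K := single 0 0 1
def Em : M2 K := single 0 1 1

/-- `σ = log(1+ξE) = ξE` (since `E² = 0`). -/
def σm (ξ : K) : M2 K := ξ • Em K

/-- `F₁₂ = F ⊗ 1 = 1 + H⊗σ⊗1`. -/
def F12 (ξ : K) : T3m K := 1 + Hm K ⊗ₜ[K] (σm K ξ ⊗ₜ[K] (1 : M2 K))

/-- `F₂₃ = 1 ⊗ F = 1 + 1⊗H⊗σ`. -/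
def F23 (ξ : K) : T3m K := 1 + (1 : M2 K) ⊗ₜ[K] (Hm K ⊗ₜ[K] σm K ξ)

/-- `ΔH ⊗ σ = H⊗1⊗σ + 1⊗H⊗σ`. -/
def X1 (ξ : K) : T3m K :=
  Hm K ⊗ₜ[K] ((1 : M2 K) ⊗ₜ[K] σm K ξ) + (1 : M2 K) ⊗ₜ[K] (Hm K ⊗ₜ[K] σm K ξ)

/-- `H ⊗ Δσ` with `Δσ = log(1+ξΔE) = ξ(E⊗1) + ξ(1⊗E) − ξ²(E⊗E)`. -/
def X2 (ξ : K) : T3m K :=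
  Hm K ⊗ₜ[K] (ξ • (Em K ⊗ₜ[K] (1 : M2 K)) + ξ • ((1 : M2 K) ⊗ₜ[K] Em K)
    - ξ ^ 2 • (Em K ⊗ₜ[K] Em K))

/-- `(Δ⊗id)(F) = exp(ΔH⊗σ)`, truncated exactly. -/
def DF1 (ξ : K) : T3m K := 1 + X1 K ξ + (2 : K)⁻¹ • (X1 K ξ * X1 K ξ)

/-- `(id⊗Δ)(F) = exp(H⊗Δσ)`, truncated exactly. -/
def DF2 (ξ : K) : T3m K := 1 + X2 K ξ + (2 : K)⁻¹ • (X2 K ξ * X2 K ξ)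

/-! `(ΔH ⊗ σ)² = 0` because `σ² = 0`, while `(H ⊗ Δσ)² = 2ξ² H⊗E⊗E`, so the truncated
exponentials are `(Δ⊗id)(F) = 1 + ΔH ⊗ σ` and `(id⊗Δ)(F) = 1 + ξ (H⊗E⊗1 + H⊗1⊗E)`.
Multiplying out with `H² = H`, `HE = E`, `EH = 0`, `E² = 0`, both sides of the cocycle identity
become `1 + ξ (H⊗E⊗1 + H⊗1⊗E + 1⊗H⊗E) + ξ² H⊗E⊗E`. Only these four relations enter. -/

section

variable {R A : Type*} [CommRing R] [Ring A] [Algebra R A] {h e : A}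

lemma mul_self_coproduct_tmul_eq_zero (ee : e * e = 0) (ξ : R) :
    (h ⊗ₜ[R] ((1 : A) ⊗ₜ[R] (ξ • e)) + (1 : A) ⊗ₜ[R] (h ⊗ₜ[R] (ξ • e))) *
      (h ⊗ₜ[R] ((1 : A) ⊗ₜ[R] (ξ • e)) + (1 : A) ⊗ₜ[R] (h ⊗ₜ[R] (ξ • e))) = 0 := by
  simp [mul_add, add_mul, smul_mul_assoc, mul_smul_comm, tmul_smul, ee]

lemma mul_self_tmul_logCoproduct (hh : h * h = h) (ee : e * e = 0) (ξ : R) :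
    (h ⊗ₜ[R] (ξ • (e ⊗ₜ[R] (1 : A)) + ξ • ((1 : A) ⊗ₜ[R] e) - ξ ^ 2 • (e ⊗ₜ[R] e))) *
      (h ⊗ₜ[R] (ξ • (e ⊗ₜ[R] (1 : A)) + ξ • ((1 : A) ⊗ₜ[R] e) - ξ ^ 2 • (e ⊗ₜ[R] e))) =
      (2 * ξ ^ 2) • h ⊗ₜ[R] (e ⊗ₜ[R] e) := by
  simp only [tmul_sub, tmul_add, tmul_smul, mul_sub, mul_add, sub_mul, add_mul, mul_smul_comm,
    smul_mul_assoc, Algebra.TensorProduct.tmul_mul_tmul, hh, ee, mul_one, one_mul, zero_tmul,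
    tmul_zero, smul_zero, zero_add, add_zero, sub_zero, sub_self]
  module

end

section

variable {K} {A : Type*} [Ring A] [Algebra K A] {h e : A}

theorem jordanian_twist_cocycle (hh : h * h = h) (he : h * e = e) (eh : e * h = 0)
    (ee : e * e = 0) (ξ : K) :
    (1 + h ⊗ₜ[K] ((ξ • e) ⊗ₜ[K] (1 : A))) *
      (1 + (h ⊗ₜ[K] ((1 : A) ⊗ₜ[K] (ξ • e)) + (1 : A) ⊗ₜ[K] (h ⊗ₜ[K] (ξ • e))) +
        (2 : K)⁻¹ • ((h ⊗ₜ[K] ((1 : A) ⊗ₜ[K] (ξ • e)) + (1 : A) ⊗ₜ[K] (h ⊗ₜ[K] (ξ • e))) *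
          (h ⊗ₜ[K] ((1 : A) ⊗ₜ[K] (ξ • e)) + (1 : A) ⊗ₜ[K] (h ⊗ₜ[K] (ξ • e))))) =
    (1 + (1 : A) ⊗ₜ[K] (h ⊗ₜ[K] (ξ • e))) *
      (1 + h ⊗ₜ[K] (ξ • (e ⊗ₜ[K] (1 : A)) + ξ • ((1 : A) ⊗ₜ[K] e) - ξ ^ 2 • (e ⊗ₜ[K] e)) +
        (2 : K)⁻¹ •
          ((h ⊗ₜ[K] (ξ • (e ⊗ₜ[K] (1 : A)) + ξ • ((1 : A) ⊗ₜ[K] e) - ξ ^ 2 • (e ⊗ₜ[K] e))) *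
            (h ⊗ₜ[K] (ξ • (e ⊗ₜ[K] (1 : A)) + ξ • ((1 : A) ⊗ₜ[K] e) - ξ ^ 2 • (e ⊗ₜ[K] e))))) := by
  rw [mul_self_coproduct_tmul_eq_zero ee, mul_self_tmul_logCoproduct hh ee, smul_smul,
    inv_mul_cancel_left₀ two_ne_zero]
  simp only [tmul_sub, tmul_add, tmul_smul, ← smul_tmul', mul_sub, mul_add, add_mul,
    mul_smul_comm, smul_mul_assoc, Algebra.TensorProduct.tmul_mul_tmul, hh, he, eh, ee, mul_one,
    one_mul, zero_tmul, tmul_zero, smul_zero, smul_add, add_zero]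
  module

end

section

omit [CharZero K]

lemma Hm_mul_Hm : Hm K * Hm K = Hm K := by simp [Hm]

lemma Hm_mul_Em : Hm K * Em K = Em K := by simp [Hm, Em]

lemma Em_mul_Hm : Em K * Hm K = 0 := by simp [Hm, Em]

lemma Em_mul_Em : Em K * Em K = 0 := by simp [Em]

end

theorem stmt14 (ξ : K) : F12 K ξ * DF1 K ξ = F23 K ξ * DF2 K ξ :=
  jordanian_twist_cocycle (Hm_mul_Hm K) (Hm_mul_Em K) (Em_mul_Hm K) (Em_mul_Em K) ξ

end
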